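/- The Efimov transcendental function Λ(m) := (2/π)(m+1)²(1/√(m(m+2)) − arcsin(1/(m+1))), defined for m > 0, is strictly positive and strictly monotone decreasing on (0,∞), is continuous there, and its range is all of (0,∞); consequently, for every t > 0 there exists a unique m > 0 with Λ(m) = t (in particular there is a unique mass m* > 0 with Λ(m*) = 1). -/

import Mathlib

noncomputable section

/-- The Efimov transcendental function
`Λ(m) = (2/π)(m+1)² (1/√(m(m+2)) − arcsin(1/(m+1)))`. -/
def Efimov (m : ℝ) : ℝ :=
  (2 / Real.pi) * (m + 1) ^ 2 *
    (1 / Real.sqrt (m * (m + 2)) - Real.arcsin (1 / (m + 1)))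

/-!
With `x = 1/(m+1) ∈ (0, 1)` one has `Λ(m) = (2/π) N(x)/x²`, where
`N(x) = x/√(1-x²) - arcsin x = tan θ - θ` for `x = sin θ`, and `N'(x) = x²/(1-x²)^(3/2)`.
Since `N(0) = 0` and `N' > 0`, `N` is positive on `(0, 1)`. The derivative of `N(x)/x²` has the
sign of `x N'(x) - 2 N(x)`, which also vanishes at `0` and has derivative
`x²(1+2x²)/(1-x²)^(5/2) > 0`; so `x ↦ N(x)/x²` is positive and strictly increasing on `(0, 1)`.
The same inequality `2N(x) < x³/(1-x²)^(3/2)` squeezes `N(x)/x²` to `0` as `x → 0`, while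
`N(x) ≥ x/√(1-x²) - π/2` sends it to `∞` as `x → 1`; the intermediate value theorem then gives
every positive value.
-/

open Real Set Filter Topology

lemma lt_of_hasDerivAt_pos {f f' : ℝ → ℝ} {a b x : ℝ}
    (hf : ∀ y ∈ Ico a b, HasDerivAt f (f' y) y) (hf' : ∀ y ∈ Ioo a b, 0 < f' y)
    (hx : x ∈ Ioo a b) : f a < f x := by
  refine strictMonoOn_of_hasDerivWithinAt_pos (convex_Ico a b)
    (fun y hy => (hf y hy).continuousAt.continuousWithinAt)
    (fun y hy => (hf y (interior_subset hy)).hasDerivWithinAt) (fun y hy => hf' y ?_)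
    (left_mem_Ico.2 (hx.1.trans hx.2)) (Ioo_subset_Ico_self hx) hx.1
  rwa [interior_Ico] at hy

lemma surjOn_Ioi_of_tendsto {f : ℝ → ℝ} {a b c : ℝ} (hab : a < b) (hf : ContinuousOn f (Ioo a b))
    (ha : Tendsto f (𝓝[>] a) (𝓝 c)) (hb : Tendsto f (𝓝[<] b) atTop) :
    SurjOn f (Ioo a b) (Ioi c) := by
  intro t (ht : c < t)
  obtain ⟨x, hxt, hx⟩ := ((ha.eventually (gt_mem_nhds ht)).and (Ioo_mem_nhdsGT hab)).exists
  obtain ⟨y, hyt, hy⟩ := ((hb.eventually_gt_atTop t).and (Ioo_mem_nhdsLT hab)).exists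
  have hsub : uIcc x y ⊆ Ioo a b := ordConnected_Ioo.uIcc_subset hx hy
  obtain ⟨z, hz, rfl⟩ := intermediate_value_uIcc (hf.mono hsub)
    (Icc_subset_uIcc ⟨hxt.le, hyt.le⟩)
  exact ⟨z, hsub hz, rfl⟩

lemma image_inv_add_one_Ioi : (fun m : ℝ => (m + 1)⁻¹) '' Ioi 0 = Ioo 0 1 := by
  rw [show (fun m : ℝ => (m + 1)⁻¹) = Inv.inv ∘ (· + 1) from rfl, image_comp]
  simp [Set.image_inv_eq_inv, inv_Ioi₀ one_pos]

lemma hasDerivAt_sqrt_one_sub_sq {x : ℝ} (hx : 1 - x ^ 2 ≠ 0) :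
    HasDerivAt (fun y => √(1 - y ^ 2)) (-x / √(1 - x ^ 2)) x := by
  convert ((hasDerivAt_pow 2 x).const_sub 1).sqrt hx using 1
  field_simp
  norm_num [mul_comm]

lemma hasDerivAt_div_sqrt_one_sub_sq {x : ℝ} (hx : 0 < 1 - x ^ 2) :
    HasDerivAt (fun y => y / √(1 - y ^ 2)) (1 / √(1 - x ^ 2) ^ 3) x := by
  have hu : 0 < √(1 - x ^ 2) := sqrt_pos.2 hx
  refine ((hasDerivAt_id x).div (hasDerivAt_sqrt_one_sub_sq hx.ne') hu.ne').congr_deriv ?_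
  have := sq_sqrt hx.le
  simp only [id]
  field_simp
  linear_combination this

lemma tendsto_div_sqrt_one_sub_sq_nhdsLT_one :
    Tendsto (fun x => x / √(1 - x ^ 2)) (𝓝[<] 1) atTop := by
  simp_rw [← tan_arcsin]
  refine tendsto_tan_pi_div_two.comp (tendsto_nhdsWithin_of_tendsto_nhds_of_eventually_within _
    ?_ (eventually_nhdsWithin_of_forall fun x hx => arcsin_lt_pi_div_two.2 hx))
  simpa [arcsin_one] using continuous_arcsin.continuousAt.tendsto.mono_left
    (nhdsWithin_le_nhds (a := (1 : ℝ)) (s := Iio 1))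

namespace Efimov

def numerator (x : ℝ) : ℝ := x / √(1 - x ^ 2) - arcsin x

lemma hasDerivAt_numerator {x : ℝ} (h₁ : -1 < x) (h₂ : x < 1) :
    HasDerivAt numerator (x ^ 2 / √(1 - x ^ 2) ^ 3) x := by
  have hx : 0 < 1 - x ^ 2 := by nlinarith
  refine ((hasDerivAt_div_sqrt_one_sub_sq hx).sub
    (hasDerivAt_arcsin h₁.ne' h₂.ne)).congr_deriv ?_
  have := sq_sqrt hx.le
  field_simp
  linear_combination -this

lemma numerator_pos {x : ℝ} (h₀ : 0 < x) (h₁ : x < 1) : 0 < numerator x := by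
  simpa [numerator] using lt_of_hasDerivAt_pos
    (fun y hy => hasDerivAt_numerator (by linarith [hy.1]) hy.2)
    (fun y hy => div_pos (pow_pos hy.1 2) (pow_pos (sqrt_pos.2 (by nlinarith [hy.1, hy.2])) 3))
    ⟨h₀, h₁⟩

-- `x * deriv numerator x - 2 * numerator x`, the sign of the derivative of `numerator x / x ^ 2`
def defect (x : ℝ) : ℝ := (x / √(1 - x ^ 2)) ^ 3 - 2 * numerator x

lemma hasDerivAt_defect {x : ℝ} (h₁ : -1 < x) (h₂ : x < 1) :
    HasDerivAt defect (x ^ 2 * (1 + 2 * x ^ 2) / √(1 - x ^ 2) ^ 5) x := by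
  have hx : 0 < 1 - x ^ 2 := by nlinarith
  refine (((hasDerivAt_div_sqrt_one_sub_sq hx).pow 3).sub
    ((hasDerivAt_numerator h₁ h₂).const_mul 2)).congr_deriv ?_
  have := sq_sqrt hx.le
  norm_num
  field_simp
  linear_combination (-2 * x ^ 2) * this

lemma defect_pos {x : ℝ} (h₀ : 0 < x) (h₁ : x < 1) : 0 < defect x := by
  simpa [defect, numerator] using lt_of_hasDerivAt_pos
    (fun y hy => hasDerivAt_defect (by linarith [hy.1]) hy.2)
    (fun y hy => div_pos (mul_pos (pow_pos hy.1 2) (by positivity))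
      (pow_pos (sqrt_pos.2 (by nlinarith [hy.1, hy.2])) 5))
    ⟨h₀, h₁⟩

def reduced (x : ℝ) : ℝ := 2 / π * (numerator x / x ^ 2)

lemma eq_reduced {m : ℝ} (hm : -1 < m) : Efimov m = reduced (m + 1)⁻¹ := by
  have hm1 : 0 < m + 1 := by linarith
  have hsqrt : √(1 - ((m + 1)⁻¹) ^ 2) = √(m * (m + 2)) / (m + 1) := by
    rw [show 1 - ((m + 1)⁻¹) ^ 2 = m * (m + 2) / (m + 1) ^ 2 by field_simp; ring,
      sqrt_div' _ (by positivity), sqrt_sq hm1.le]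
  rw [Efimov, reduced, numerator, hsqrt, div_div_eq_mul_div, inv_mul_cancel₀ hm1.ne', one_div]
  field_simp

lemma hasDerivAt_reduced {x : ℝ} (h₀ : 0 < x) (h₁ : x < 1) :
    HasDerivAt reduced (2 / π * (defect x / x ^ 3)) x := by
  refine (((hasDerivAt_numerator (by linarith) h₁).div (hasDerivAt_pow 2 x)
    (pow_ne_zero 2 h₀.ne')).const_mul (2 / π)).congr_deriv ?_
  rw [defect]
  field_simp
  ring

lemma strictMonoOn_reduced : StrictMonoOn reduced (Ioo 0 1) :=
  strictMonoOn_of_hasDerivWithinAt_pos (convex_Ioo 0 1)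
    (fun x hx => (hasDerivAt_reduced hx.1 hx.2).continuousAt.continuousWithinAt)
    (fun x hx => by
      rw [interior_Ioo] at hx ⊢
      exact (hasDerivAt_reduced hx.1 hx.2).hasDerivWithinAt)
    (fun x hx => by
      rw [interior_Ioo] at hx
      exact mul_pos (div_pos two_pos pi_pos) (div_pos (defect_pos hx.1 hx.2) (pow_pos hx.1 3)))

lemma reduced_pos {x : ℝ} (h₀ : 0 < x) (h₁ : x < 1) : 0 < reduced x :=
  mul_pos (div_pos two_pos pi_pos) (div_pos (numerator_pos h₀ h₁) (pow_pos h₀ 2))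

lemma reduced_lt {x : ℝ} (h₀ : 0 < x) (h₁ : x < 1) : reduced x < x / (π * √(1 - x ^ 2) ^ 3) := by
  have hu : 0 < √(1 - x ^ 2) := sqrt_pos.2 (by nlinarith)
  have h := defect_pos h₀ h₁
  rw [defect, div_pow] at h
  rw [reduced, lt_div_iff₀ (by positivity)]
  calc 2 / π * (numerator x / x ^ 2) * (π * √(1 - x ^ 2) ^ 3)
      = 2 * numerator x * √(1 - x ^ 2) ^ 3 / x ^ 2 := by field_simp
    _ < x ^ 3 / √(1 - x ^ 2) ^ 3 * √(1 - x ^ 2) ^ 3 / x ^ 2 := by gcongr; linarith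
    _ = x := by field_simp

lemma tendsto_reduced_nhdsGT_zero : Tendsto reduced (𝓝[>] 0) (𝓝 0) := by
  have hbound : Tendsto (fun x => x / (π * √(1 - x ^ 2) ^ 3)) (𝓝[>] 0) (𝓝 0) := by
    have : ContinuousAt (fun x => x / (π * √(1 - x ^ 2) ^ 3)) 0 := by
      fun_prop (disch := simp [pi_ne_zero])
    simpa using this.tendsto.mono_left nhdsWithin_le_nhds
  refine tendsto_of_tendsto_of_tendsto_of_le_of_le' tendsto_const_nhds hbound ?_ ?_ <;>
    filter_upwards [Ioo_mem_nhdsGT one_pos] with x hx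
  exacts [(reduced_pos hx.1 hx.2).le, (reduced_lt hx.1 hx.2).le]

lemma le_reduced {x : ℝ} (h₀ : 0 < x) (h₁ : x < 1) :
    2 / π * (x / √(1 - x ^ 2)) - 1 ≤ reduced x := by
  have hN := numerator_pos h₀ h₁
  calc 2 / π * (x / √(1 - x ^ 2)) - 1 = 2 / π * (x / √(1 - x ^ 2) - π / 2) := by
        field_simp
    _ ≤ 2 / π * numerator x := by
        gcongr
        exact sub_le_sub_left (arcsin_le_pi_div_two x) _
    _ ≤ reduced x := by
        unfold reduced
        gcongr
        exact le_div_self hN.le (by positivity) (pow_le_one₀ h₀.le h₁.le)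

lemma tendsto_reduced_nhdsLT_one : Tendsto reduced (𝓝[<] 1) atTop := by
  refine tendsto_atTop_mono' _ ?_ (tendsto_atTop_add_const_right _ (-1)
    (tendsto_div_sqrt_one_sub_sq_nhdsLT_one.const_mul_atTop (div_pos two_pos pi_pos)))
  filter_upwards [Ioo_mem_nhdsLT zero_lt_one] with x hx
  exact le_reduced hx.1 hx.2

end Efimov

open Efimov in
/-- The Efimov transcendental function is strictly positive, strictly monotone
decreasing, and continuous on `(0, ∞)`, with range all of `(0, ∞)`; consequently
for every `t > 0` there is a unique `m > 0` with `Λ(m) = t` (in particular a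
unique `m* > 0` with `Λ(m*) = 1`). -/
theorem efimov_properties :
    (∀ m ∈ Set.Ioi (0 : ℝ), 0 < Efimov m) ∧
    StrictAntiOn Efimov (Set.Ioi (0 : ℝ)) ∧
    ContinuousOn Efimov (Set.Ioi (0 : ℝ)) ∧
    Efimov '' Set.Ioi (0 : ℝ) = Set.Ioi (0 : ℝ) ∧
    (∀ t : ℝ, 0 < t → ∃! m : ℝ, 0 < m ∧ Efimov m = t) := by
  have heq : EqOn Efimov (reduced ∘ fun m => (m + 1)⁻¹) (Ioi 0) :=
    fun m (hm : 0 < m) => eq_reduced (by linarith)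
  have hmaps : MapsTo (fun m : ℝ => (m + 1)⁻¹) (Ioi 0) (Ioo 0 1) :=
    image_subset_iff.1 image_inv_add_one_Ioi.subset
  have hcont : ContinuousOn reduced (Ioo 0 1) :=
    fun x hx => (hasDerivAt_reduced hx.1 hx.2).continuousAt.continuousWithinAt
  have hanti : StrictAntiOn Efimov (Ioi 0) :=
    (strictMonoOn_reduced.comp_strictAntiOn (fun a (ha : 0 < a) b _ hab =>
      inv_strictAnti₀ (by linarith) (by linarith)) hmaps).congr heq.symm
  have himage : Efimov '' Ioi 0 = Ioi 0 := by
    rw [heq.image_eq, image_comp, image_inv_add_one_Ioi]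
    exact MapsTo.image_subset (fun x hx => reduced_pos hx.1 hx.2) |>.antisymm
      (surjOn_Ioi_of_tendsto one_pos hcont tendsto_reduced_nhdsGT_zero tendsto_reduced_nhdsLT_one)
  refine ⟨fun m hm => himage.subset (mem_image_of_mem Efimov hm), hanti, ?_, himage,
    fun t ht => ?_⟩
  · exact (hcont.comp ((continuousOn_id.add continuousOn_const).inv₀
      fun m (hm : 0 < m) => show m + 1 ≠ 0 by positivity) hmaps).congr heq
  · obtain ⟨m, hm, rfl⟩ := himage.superset ht
    exact ⟨m, ⟨hm, rfl⟩, fun m' ⟨hm', he⟩ => hanti.injOn hm' hm he⟩
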